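/- If G is a graph on n vertices with minimum degree at least δ, then the largest eigenvalue λ(G) of its adjacency matrix satisfies λ(G) ≤ (1/2)(δ - 1 + sqrt(8·e(G) - 4δn + (δ+1)²)), where e(G) is the number of edges of G. -/

import Mathlib

open SimpleGraph

/-- `K_δ ∨ (K_{n-2δ+k} ∪ I_{δ-k})` on `Fin n`: vertices `< d` form the dominating
clique `K_d`, vertices in `[d, n-d+k)` form the clique, the rest are independent. -/
def Hgraph (n k d : ℕ) : SimpleGraph (Fin n) where
  Adj u v := u ≠ v ∧ ((u : ℕ) < d ∨ (v : ℕ) < d ∨ ((u : ℕ) < n - d + k ∧ (v : ℕ) < n - d + k))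
  symm := by constructor; intro u v h; exact ⟨h.1.symm, by tauto⟩
  loopless := by constructor; intro u h; exact h.1 rfl

/-- `K_{k+1} ∨ (K_{n-d-1} ∪ K_{d-k})` on `Fin n`: vertices `< k+1` form the dominating
clique, `[k+1, n-d+k)` forms `K_{n-d-1}`, `[n-d+k, n)` forms `K_{d-k}`. -/
def Lgraph (n k d : ℕ) : SimpleGraph (Fin n) where
  Adj u v := u ≠ v ∧ ((u : ℕ) < k + 1 ∨ (v : ℕ) < k + 1 ∨
    ((u : ℕ) < n - d + k ∧ (v : ℕ) < n - d + k) ∨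
    (n - d + k ≤ (u : ℕ) ∧ n - d + k ≤ (v : ℕ)))
  symm := by constructor; intro u v h; exact ⟨h.1.symm, by tauto⟩
  loopless := by constructor; intro u h; exact h.1 rfl

/-- `K_m ∪ I_{n-m}` on `Fin n`: vertices `< m` form a clique, the rest are isolated. -/
def KIgraph (n m : ℕ) : SimpleGraph (Fin n) where
  Adj u v := u ≠ v ∧ (u : ℕ) < m ∧ (v : ℕ) < m
  symm := by constructor; intro u v h; exact ⟨h.1.symm, h.2.2, h.2.1⟩
  loopless := by constructor; intro u h; exact h.1 rfl

/-- Degree of a vertex, as the cardinality of its neighbour set. -/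
noncomputable def deg {V : Type*} (G : SimpleGraph V) (v : V) : ℕ := (G.neighborSet v).ncard

/-- Number of edges of a graph. -/
noncomputable def eCount {V : Type*} (G : SimpleGraph V) : ℕ := G.edgeSet.ncard

open scoped Classical in
/-- Adjacency matrix over `ℝ`. -/
noncomputable def adjMat {V : Type*} [Fintype V] (G : SimpleGraph V) : Matrix V V ℝ :=
  fun u v => if G.Adj u v then 1 else 0

open scoped Classical in
/-- Signless Laplacian matrix `Q(G) = D(G) + A(G)` over `ℝ`. -/
noncomputable def sLap {V : Type*} [Fintype V] (G : SimpleGraph V) : Matrix V V ℝ :=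
  fun u v => (if u = v then (deg G u : ℝ) else 0) + (if G.Adj u v then 1 else 0)

/-- The largest (real) eigenvalue of a matrix. -/
noncomputable def maxEig {V : Type*} [Fintype V] (A : Matrix V V ℝ) : ℝ :=
  sSup {μ : ℝ | ∃ x : V → ℝ, x ≠ 0 ∧ A.mulVec x = μ • x}

/-- A graph is `k`-Hamiltonian if deleting any set of at most `k` vertices
leaves a Hamiltonian graph. -/
def IsKHamiltonian {n : ℕ} (G : SimpleGraph (Fin n)) (k : ℕ) : Prop :=
  ∀ S : Finset (Fin n), S.card ≤ k →
    (G.induce ((↑(Sᶜ) : Set (Fin n)))).IsHamiltonian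

/-- A graph is `k`-edge-Hamiltonian if every linear forest with at most `k` edges
(a set of edges forming vertex-disjoint paths) is contained in a Hamiltonian cycle. -/
def IsKEdgeHamiltonian {n : ℕ} (G : SimpleGraph (Fin n)) (k : ℕ) : Prop :=
  ∀ F : Set (Sym2 (Fin n)), F ⊆ G.edgeSet → F.ncard ≤ k →
    (SimpleGraph.fromEdgeSet F).IsAcyclic →
    (∀ v, ((SimpleGraph.fromEdgeSet F).neighborSet v).ncard ≤ 2) →
    ∃ (a : Fin n) (p : G.Walk a a), p.IsHamiltonianCycle ∧ ∀ e ∈ F, e ∈ p.edges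

/-- The `s`-closure of a graph: the smallest supergraph in which any two distinct
non-adjacent vertices have degree sum less than `s`. -/
noncomputable def closureGraph {V : Type*} (G : SimpleGraph V) (s : ℕ) : SimpleGraph V :=
  sInf {H | G ≤ H ∧ ∀ u v, u ≠ v → s ≤ deg H u + deg H v → H.Adj u v}

/-! Let `(μ, x)` be an eigenpair of `A(G)`, put `z = |x|` and let `w` be a vertex maximising `z`, so
that `|μ| z ≤ A z` entrywise. Summing over all vertices and bounding `deg u * z u` by
`(deg u - δ) z w + δ z u` gives `|μ| S ≤ (2e - δn) z w + δ S` with `S = ∑ z`, while the row of `w`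
gives `(|μ| + 1) z w ≤ S`. Eliminating `S` yields `(|μ| + 1)(|μ| - δ) ≤ 2e - δn`, a quadratic
inequality in `|μ|` whose larger root is the stated bound. -/

open Finset Matrix

section DegreeSums

variable {V : Type*} [Fintype V] (G : SimpleGraph V) [DecidableRel G.Adj]

theorem deg_eq_degree (v : V) : deg G v = G.degree v := by
  rw [deg, Set.ncard_eq_toFinset_card']
  rfl

theorem eCount_eq_card_edgeFinset : eCount G = #G.edgeFinset := by
  rw [eCount, ← coe_edgeFinset, Set.ncard_coe_finset]

theorem sum_sum_neighborFinset {M : Type*} [AddCommMonoid M] (f : V → M) :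
    ∑ v, ∑ u ∈ G.neighborFinset v, f u = ∑ u, G.degree u • f u := by
  simp only [neighborFinset_eq_filter, sum_filter]
  rw [sum_comm]
  refine sum_congr rfl fun u _ => ?_
  rw [← sum_filter, sum_const, ← card_neighborFinset_eq_degree, neighborFinset_eq_filter]
  simp only [G.adj_comm]

theorem mul_card_le_two_mul_card_edgeFinset {d : ℕ} (hδ : ∀ v, d ≤ G.degree v) :
    d * Fintype.card V ≤ 2 * #G.edgeFinset := by
  rw [← sum_degrees_eq_twice_card_edges, mul_comm, ← smul_eq_mul, ← card_univ, ← sum_const]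
  exact sum_le_sum fun v _ => hδ v

theorem adjMat_eq_adjMatrix : adjMat G = G.adjMatrix ℝ := by
  ext u v
  simp [adjMat, adjMatrix_apply]

end DegreeSums

section Subeigenvector

variable {V : Type*} [Fintype V] (G : SimpleGraph V) [DecidableRel G.Adj]
  {z : V → ℝ} {ν : ℝ} {d : ℕ}

theorem sum_neighborFinset_le_sum_sub (hz : ∀ v, 0 ≤ z v) (w : V) :
    ∑ u ∈ G.neighborFinset w, z u ≤ ∑ u, z u - z w := by
  classical
  rw [← sum_erase_eq_sub (mem_univ w)]
  refine sum_le_sum_of_subset_of_nonneg (fun u hu => ?_) fun u _ _ => hz u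
  exact mem_erase.2 ⟨(G.ne_of_adj ((G.mem_neighborFinset w u).1 hu)).symm, mem_univ u⟩

theorem sum_degree_mul_le (hδ : ∀ v, d ≤ G.degree v) {w : V} (hw : ∀ v, z v ≤ z w) :
    ∑ u, (G.degree u : ℝ) * z u ≤
      (2 * #G.edgeFinset - d * Fintype.card V) * z w + d * ∑ u, z u := by
  have hsum : ∑ u, (G.degree u : ℝ) = 2 * #G.edgeFinset := by
    exact_mod_cast sum_degrees_eq_twice_card_edges G
  calc ∑ u, (G.degree u : ℝ) * z u ≤ ∑ u, (((G.degree u : ℝ) - d) * z w + d * z u) := by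
        refine sum_le_sum fun u _ => ?_
        have hd : (d : ℝ) ≤ G.degree u := by exact_mod_cast hδ u
        linarith [mul_le_mul_of_nonneg_left (hw u) (sub_nonneg.2 hd)]
    _ = (2 * #G.edgeFinset - d * Fintype.card V) * z w + d * ∑ u, z u := by
        rw [sum_add_distrib, ← sum_mul, ← mul_sum, sum_sub_distrib, hsum, sum_const, card_univ,
          nsmul_eq_mul, mul_comm (Fintype.card V : ℝ)]

theorem add_one_mul_sub_le_of_le_sum_neighborFinset (hδ : ∀ v, d ≤ G.degree v) (hν : 0 ≤ ν)
    (hz : ∀ v, 0 ≤ z v) {w : V} (hw : ∀ v, z v ≤ z w) (hw₀ : 0 < z w)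
    (hsub : ∀ v, ν * z v ≤ ∑ u ∈ G.neighborFinset v, z u) :
    (ν + 1) * (ν - d) ≤ 2 * #G.edgeFinset - d * Fintype.card V := by
  set S := ∑ u, z u
  have hS : ν * S ≤ (2 * #G.edgeFinset - d * Fintype.card V) * z w + d * S :=
    calc ν * S = ∑ v, ν * z v := mul_sum _ _ _
      _ ≤ ∑ v, ∑ u ∈ G.neighborFinset v, z u := sum_le_sum fun v _ => hsub v
      _ = ∑ u, (G.degree u : ℝ) * z u := by simp only [sum_sum_neighborFinset, nsmul_eq_mul]
      _ ≤ _ := sum_degree_mul_le G hδ hw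
  have hSw : (ν + 1) * z w ≤ S := by linarith [hsub w, sum_neighborFinset_le_sum_sub G hz w]
  rcases le_or_gt ν d with hνd | hνd
  · have hdn : (d * Fintype.card V : ℝ) ≤ 2 * #G.edgeFinset := by
      exact_mod_cast mul_card_le_two_mul_card_edgeFinset G hδ
    linarith [mul_nonpos_of_nonneg_of_nonpos (by linarith : 0 ≤ ν + 1) (sub_nonpos.2 hνd)]
  · refine le_of_mul_le_mul_right ?_ hw₀
    calc (ν + 1) * (ν - d) * z w = (ν + 1) * z w * (ν - d) := by ring
      _ ≤ S * (ν - d) := mul_le_mul_of_nonneg_right hSw (by linarith)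
      _ ≤ _ := by linarith

theorem abs_mul_abs_le_sum_neighborFinset {x : V → ℝ} {μ : ℝ}
    (hμ : G.adjMatrix ℝ *ᵥ x = μ • x) (v : V) :
    |μ| * |x v| ≤ ∑ u ∈ G.neighborFinset v, |x u| := by
  have hv := congrFun hμ v
  rw [adjMatrix_mulVec_apply, Pi.smul_apply, smul_eq_mul] at hv
  rw [← abs_mul, ← hv]
  exact abs_sum_le_sum_abs _ _

theorem add_one_mul_sub_le_of_mulVec_eq_smul (hδ : ∀ v, d ≤ G.degree v) {x : V → ℝ} {μ : ℝ}
    (hx : x ≠ 0) (hμ : G.adjMatrix ℝ *ᵥ x = μ • x) :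
    (|μ| + 1) * (|μ| - d) ≤ 2 * #G.edgeFinset - d * Fintype.card V := by
  obtain ⟨v, hv⟩ := Function.ne_iff.1 hx
  obtain ⟨w, -, hw⟩ := exists_max_image univ (fun v => |x v|) ⟨v, mem_univ v⟩
  exact add_one_mul_sub_le_of_le_sum_neighborFinset G hδ (abs_nonneg μ) (fun u => abs_nonneg _)
    (fun u => hw u (mem_univ u)) ((abs_pos.2 hv).trans_le (hw v (mem_univ v)))
    (abs_mul_abs_le_sum_neighborFinset G hμ)

end Subeigenvector

theorem le_div_two_of_sq_le {t a D : ℝ} (h : (2 * t - a) ^ 2 ≤ D) : t ≤ (a + √D) / 2 := by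
  linarith [le_abs_self (2 * t - a), Real.abs_le_sqrt h]

/-- Hong–Shu–Fang / Nikiforov bound: if `G` has minimum degree at least `δ`, then
`λ(G) ≤ (δ - 1 + sqrt(8 e(G) - 4 δ n + (δ+1)²)) / 2`. -/
theorem stmt_5 {V : Type*} [Fintype V] (G : SimpleGraph V) (d : ℕ)
    (hδ : ∀ v, d ≤ deg G v) :
    maxEig (adjMat G) ≤
      ((d : ℝ) - 1 +
        Real.sqrt (8 * (eCount G : ℝ) - 4 * d * (Fintype.card V : ℝ) + ((d : ℝ) + 1) ^ 2)) / 2 := by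
  classical
  have hδ' : ∀ v, d ≤ G.degree v := fun v => deg_eq_degree G v ▸ hδ v
  have hdn : (d * Fintype.card V : ℝ) ≤ 2 * #G.edgeFinset := by
    exact_mod_cast mul_card_le_two_mul_card_edgeFinset G hδ'
  rw [eCount_eq_card_edgeFinset, adjMat_eq_adjMatrix]
  refine Real.sSup_le ?_ ?_
  · rintro μ ⟨x, hx, hμ⟩
    have key := add_one_mul_sub_le_of_mulVec_eq_smul G hδ' hx hμ
    exact (le_abs_self μ).trans (le_div_two_of_sq_le (by linear_combination 4 * key))
  -- `maxEig` is an `sSup`, which is `0` on the empty set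
  · exact (Nat.cast_nonneg d).trans (le_div_two_of_sq_le (by linear_combination 4 * hdn))
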